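/- If a family of linear codes {C_r} in F_2^n with minimum dimension t is universal_2 (i.e., 1-almost universal_2: Pr_r[x ∈ C_r] ≤ 2^(t-n) for all nonzero x), then the dual family {C_r^⊥} is 2-almost universal_2 with maximum dimension n-t: Pr_r[x ∈ C_r^⊥] ≤ 2·2^(-t) · (1 - 2^(t-n-1)) ≤ 2^(1-t) for all nonzero x. In particular Pr_r[x ∈ C_r^⊥] ≤ 2^((n-t)-n)·2. -/
import Mathlib


open scoped Classical

noncomputable def pr {I : Type*} [Fintype I] (P : I → Prop) : ℝ :=
  ((Finset.univ.filter P).card : ℝ) / (Fintype.card I : ℝ)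

def dualSet {n : ℕ} (C : Set (Fin n → ZMod 2)) : Set (Fin n → ZMod 2) :=
  {y | ∀ x ∈ C, (∑ i, x i * y i) = 0}

/-- the character `(-1)^⟨y,x⟩` -/
noncomputable def chi {n : ℕ} (x y : Fin n → ZMod 2) : ℝ :=
  if (∑ i, y i * x i) = 0 then 1 else -1

lemma ip_add {n : ℕ} (x y z : Fin n → ZMod 2) :
    (∑ i, (y + z) i * x i) = (∑ i, y i * x i) + (∑ i, z i * x i) := by
  rw [← Finset.sum_add_distrib]
  refine Finset.sum_congr rfl fun i _ => ?_
  simp [add_mul]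

lemma zmod2_cases : ∀ a : ZMod 2, a = 0 ∨ a = 1 := by decide

lemma chi_add_chi {n : ℕ} (x y y₀ : Fin n → ZMod 2)
    (h : (∑ i, y₀ i * x i) ≠ 0) : chi x y + chi x (y + y₀) = 0 := by
  have h1 : (∑ i, y₀ i * x i) = 1 := (zmod2_cases _).resolve_left h
  have h2 : (∑ i, (y + y₀) i * x i) = (∑ i, y i * x i) + 1 := by
    rw [ip_add, h1]
  unfold chi
  rw [h2]
  rcases zmod2_cases (∑ i, y i * x i) with h3 | h3 <;> rw [h3]
  · rw [if_pos rfl, if_neg (by decide)]; ring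
  · rw [if_neg (by decide), if_pos (by decide)]; ring

lemma sum_chi_zero {n : ℕ} (x y₀ : Fin n → ZMod 2)
    (h : (∑ i, y₀ i * x i) ≠ 0) (s : Finset (Fin n → ZMod 2))
    (hs : ∀ y ∈ s, y + y₀ ∈ s) : ∑ y ∈ s, chi x y = 0 := by
  have hy₀ : y₀ ≠ 0 := by
    rintro rfl
    exact h (by simp)
  have hinv : ∀ y : Fin n → ZMod 2, y + y₀ + y₀ = y := by
    intro y
    have : y₀ + y₀ = 0 := by
      funext i
      have : ∀ a : ZMod 2, a + a = 0 := by decide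
      simpa using this (y₀ i)
    rw [add_assoc, this, add_zero]
  refine Finset.sum_involution (fun y _ => y + y₀) (fun y _ => chi_add_chi x y y₀ h)
    (fun y _ _ => ?_) (fun y hy => hs y hy) (fun y _ => hinv y)
  intro hcontra
  exact hy₀ (by simpa using hcontra)

lemma card_zero_set {n : ℕ} (x : Fin n → ZMod 2) (hx : x ≠ 0) :
    ((Finset.univ.filter (fun y : Fin n → ZMod 2 => (∑ i, y i * x i) = 0)).card : ℝ)
      = 2 ^ n / 2 := by
  obtain ⟨i, hi⟩ : ∃ i, x i ≠ 0 := by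
    by_contra hc
    push_neg at hc
    exact hx (funext fun i => hc i)
  have hip : (∑ j, (fun j => if j = i then (1 : ZMod 2) else 0) j * x j) ≠ 0 := by
    have heq : (∑ j, (fun j => if j = i then (1 : ZMod 2) else 0) j * x j) = x i := by
      simp [ite_mul]
    rwa [heq]
  have hsum := sum_chi_zero x _ hip Finset.univ (by simp)
  have hexp : ∀ y : Fin n → ZMod 2,
      chi x y = 2 * (if (∑ j, y j * x j) = 0 then (1 : ℝ) else 0) - 1 := by
    intro y
    unfold chi
    split_ifs <;> ring
  rw [Finset.sum_congr rfl fun y _ => hexp y] at hsum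
  rw [Finset.sum_sub_distrib, ← Finset.mul_sum, Finset.sum_boole, Finset.sum_const] at hsum
  have hcard : (Finset.univ : Finset (Fin n → ZMod 2)).card = 2 ^ n := by
    simp [Finset.card_univ]
  rw [hcard] at hsum
  simp only [smul_eq_mul, mul_one, nsmul_eq_mul] at hsum
  push_cast at hsum ⊢
  linarith

/-- if a family of codes with minimum dimension `t` is universal₂
(1-almost universal₂), then the dual family is 2-almost universal₂:
`Pr_r[x ∈ C_r^⊥] ≤ 2·2^(-t)·(1 - 2^(t-n-1)) ≤ 2^(1-t)` for all nonzero `x`. -/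
theorem stmt3 {n t : ℕ} {I : Type*} [Fintype I] [Nonempty I]
    (C : I → Submodule (ZMod 2) (Fin n → ZMod 2))
    (hdim : ∀ r, t ≤ Module.finrank (ZMod 2) (C r))
    (huniv : ∀ x : Fin n → ZMod 2, x ≠ 0 →
      pr (fun r => x ∈ C r) ≤ (2 : ℝ) ^ t / 2 ^ n) :
    ∀ x : Fin n → ZMod 2, x ≠ 0 →
      pr (fun r => x ∈ dualSet (C r : Set (Fin n → ZMod 2))) ≤
          2 * ((1 : ℝ) / 2 ^ t) * (1 - (2 : ℝ) ^ t / 2 ^ (n + 1)) ∧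
      pr (fun r => x ∈ dualSet (C r : Set (Fin n → ZMod 2))) ≤ 2 / (2 : ℝ) ^ t := by
  intro x hx
  set N : ℝ := (Fintype.card I : ℝ) with hN
  have hNpos : 0 < N := by
    have := Fintype.card_pos (α := I)
    rw [hN]
    exact_mod_cast this
  set T : ℝ := (2 : ℝ) ^ t with hT
  set M : ℝ := (2 : ℝ) ^ n with hM
  have hTpos : 0 < T := by positivity
  have hMpos : 0 < M := by positivity
  -- per-code facts
  have hcardC : ∀ r, ((Finset.univ.filter (fun y => y ∈ C r)).card : ℝ)
      = (2 : ℝ) ^ (Module.finrank (ZMod 2) (C r)) := by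
    intro r
    have h1 : (Finset.univ.filter (fun y => y ∈ C r)).card = Fintype.card (C r) := by
      rw [Fintype.card_subtype]
    have h2 : Fintype.card (C r) = 2 ^ (Module.finrank (ZMod 2) (C r)) := by
      have := Module.card_eq_pow_finrank (K := ZMod 2) (V := C r)
      simpa [ZMod.card] using this
    rw [h1, h2]
    push_cast
    rfl
  have hcardC_ge : ∀ r, T ≤ ((Finset.univ.filter (fun y => y ∈ C r)).card : ℝ) := by
    intro r
    rw [hcardC r, hT]
    exact pow_le_pow_right₀ one_le_two (hdim r)
  -- Step 1: per-r character sum bound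
  have step1 : ∀ r, T * (if x ∈ dualSet (C r : Set (Fin n → ZMod 2)) then 1 else 0)
      ≤ ∑ y : Fin n → ZMod 2, (if y ∈ C r then chi x y else 0) := by
    intro r
    by_cases hd : x ∈ dualSet (C r : Set (Fin n → ZMod 2))
    · have heq : ∀ y : Fin n → ZMod 2, (if y ∈ C r then chi x y else 0)
          = (if y ∈ C r then (1 : ℝ) else 0) := by
        intro y
        by_cases hy : y ∈ C r
        · have := hd y hy
          simp [hy, chi, this]
        · simp [hy]
      rw [Finset.sum_congr rfl fun y _ => heq y, Finset.sum_boole, if_pos hd, mul_one]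
      exact hcardC_ge r
    · rw [if_neg hd, mul_zero]
      obtain ⟨y₀, hy₀m, hy₀⟩ : ∃ y₀ ∈ C r, (∑ i, y₀ i * x i) ≠ 0 := by
        by_contra hc
        push_neg at hc
        exact hd (fun c hc' => hc c hc')
      have hclosed : ∀ y ∈ Finset.univ.filter (fun y => y ∈ C r),
          y + y₀ ∈ Finset.univ.filter (fun y => y ∈ C r) := by
        intro y hy
        simp only [Finset.mem_filter, Finset.mem_univ, true_and] at hy ⊢
        exact (C r).add_mem hy hy₀m
      have := sum_chi_zero x y₀ hy₀ _ hclosed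
      rw [Finset.sum_filter] at this
      exact le_of_eq this.symm
  -- abbreviations
  set D : ℝ := ((Finset.univ.filter
      (fun r => x ∈ dualSet (C r : Set (Fin n → ZMod 2)))).card : ℝ) with hD
  set a : (Fin n → ZMod 2) → ℝ :=
      fun y => ((Finset.univ.filter (fun r => y ∈ C r)).card : ℝ) with ha
  have ha_nonneg : ∀ y, 0 ≤ a y := fun y => by rw [ha]; positivity
  -- Step 2+3: sum over r and swap
  have step2 : T * D ≤ ∑ y : Fin n → ZMod 2, chi x y * a y := by
    have hDsum : D = ∑ r : I,
        (if x ∈ dualSet (C r : Set (Fin n → ZMod 2)) then (1 : ℝ) else 0) := by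
      rw [hD, Finset.sum_boole]
    calc T * D
        = ∑ r : I, T *
            (if x ∈ dualSet (C r : Set (Fin n → ZMod 2)) then 1 else 0) := by
          rw [hDsum, Finset.mul_sum]
      _ ≤ ∑ r : I, ∑ y : Fin n → ZMod 2, (if y ∈ C r then chi x y else 0) :=
          Finset.sum_le_sum fun r _ => step1 r
      _ = ∑ y : Fin n → ZMod 2, ∑ r : I, (if y ∈ C r then chi x y else 0) :=
          Finset.sum_comm
      _ = ∑ y : Fin n → ZMod 2, chi x y * a y := by
          refine Finset.sum_congr rfl fun y _ => ?_
          rw [ha]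
          simp only
          rw [← Finset.sum_boole, Finset.mul_sum]
          refine Finset.sum_congr rfl fun r _ => ?_
          split_ifs <;> ring
  -- Step 5 : ∑ a y ≥ N * 2^t
  have step5 : N * T ≤ ∑ y : Fin n → ZMod 2, a y := by
    have hswap : ∑ y : Fin n → ZMod 2, a y
        = ∑ r : I, ((Finset.univ.filter (fun y => y ∈ C r)).card : ℝ) := by
      calc ∑ y : Fin n → ZMod 2, a y
          = ∑ y : Fin n → ZMod 2, ∑ r : I, (if y ∈ C r then (1 : ℝ) else 0) :=
            Finset.sum_congr rfl fun y _ => by rw [ha]; exact (Finset.sum_boole _ _).symm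
        _ = ∑ r : I, ∑ y : Fin n → ZMod 2, (if y ∈ C r then (1 : ℝ) else 0) :=
            Finset.sum_comm
        _ = ∑ r : I, ((Finset.univ.filter (fun y => y ∈ C r)).card : ℝ) :=
            Finset.sum_congr rfl fun r _ => Finset.sum_boole _ _
    rw [hswap]
    calc N * T = ∑ _r : I, T := by rw [Finset.sum_const, Finset.card_univ, hN]; ring
      _ ≤ _ := Finset.sum_le_sum fun r _ => hcardC_ge r
  -- a 0 = N
  have ha0 : a 0 = N := by
    rw [ha]
    simp only
    have : (Finset.univ.filter (fun r : I => (0 : Fin n → ZMod 2) ∈ C r)) = Finset.univ := by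
      refine Finset.filter_true_of_mem fun r _ => (C r).zero_mem
    rw [this, Finset.card_univ, hN]
  -- a y ≤ N * (T / M) for y ≠ 0
  have ha_le : ∀ y : Fin n → ZMod 2, y ≠ 0 → a y ≤ N * (T / M) := by
    intro y hy
    have := huniv y hy
    have hpr : pr (fun r => y ∈ C r) = a y / N := rfl
    rw [hpr, div_le_iff₀ hNpos] at this
    calc a y ≤ T / M * N := this
      _ = N * (T / M) := by ring
  -- Step 6 : bound on ∑ (chi + 1) * a
  set Z : Finset (Fin n → ZMod 2) :=
      Finset.univ.filter (fun y => (∑ i, y i * x i) = 0) with hZ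
  have h0Z : (0 : Fin n → ZMod 2) ∈ Z := by
    rw [hZ]
    simp
  have hZcard : (Z.card : ℝ) = M / 2 := by
    rw [hZ, hM]
    exact card_zero_set x hx
  have step6 : ∑ y : Fin n → ZMod 2, (chi x y + 1) * a y
      ≤ 2 * N + (M / 2 - 1) * (2 * (N * (T / M))) := by
    have hsplit : ∑ y : Fin n → ZMod 2, (chi x y + 1) * a y = ∑ y ∈ Z, 2 * a y := by
      rw [hZ, Finset.sum_filter]
      refine Finset.sum_congr rfl fun y _ => ?_
      unfold chi
      split_ifs with h <;> ring
    rw [hsplit, ← Finset.sum_erase_add _ _ h0Z, ha0]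
    have herase_card : ((Z.erase 0).card : ℝ) = M / 2 - 1 := by
      rw [Finset.card_erase_of_mem h0Z]
      have h1 : 1 ≤ Z.card := Finset.card_pos.mpr ⟨0, h0Z⟩
      push_cast [Nat.cast_sub h1]
      rw [hZcard]
    have hbound : ∑ y ∈ Z.erase 0, 2 * a y
        ≤ ((Z.erase 0).card : ℝ) * (2 * (N * (T / M))) := by
      calc ∑ y ∈ Z.erase 0, 2 * a y
          ≤ ∑ _y ∈ Z.erase 0, 2 * (N * (T / M)) :=
            Finset.sum_le_sum fun y hy =>
              mul_le_mul_of_nonneg_left (ha_le y (Finset.ne_of_mem_erase hy)) (by norm_num)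
        _ = ((Z.erase 0).card : ℝ) * (2 * (N * (T / M))) := by
            rw [Finset.sum_const, nsmul_eq_mul]
    rw [herase_card] at hbound
    linarith
  -- combine
  have key : T * D ≤ 2 * N - 2 * (N * T / M) := by
    have hdecomp : ∑ y : Fin n → ZMod 2, chi x y * a y
        = (∑ y : Fin n → ZMod 2, (chi x y + 1) * a y) - ∑ y : Fin n → ZMod 2, a y := by
      rw [← Finset.sum_sub_distrib]
      refine Finset.sum_congr rfl fun y _ => by ring
    have hrhs : 2 * N + (M / 2 - 1) * (2 * (N * (T / M))) - N * T
        = 2 * N - 2 * (N * T / M) := by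
      field_simp
      ring
    calc T * D ≤ ∑ y : Fin n → ZMod 2, chi x y * a y := step2
      _ = (∑ y : Fin n → ZMod 2, (chi x y + 1) * a y) - ∑ y : Fin n → ZMod 2, a y := hdecomp
      _ ≤ (2 * N + (M / 2 - 1) * (2 * (N * (T / M)))) - N * T := by linarith [step5, step6]
      _ = 2 * N - 2 * (N * T / M) := hrhs
  -- conclude
  have hprD : pr (fun r => x ∈ dualSet (C r : Set (Fin n → ZMod 2))) = D / N := rfl
  have hfinal : D / N ≤ 2 / T - 1 / M := by
    rw [div_le_iff₀ hNpos]
    have h3 : T * D ≤ T * ((2 / T - 1 / M) * N) := by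
      have heq : T * ((2 / T - 1 / M) * N) = 2 * N - N * T / M := by
        field_simp
      have h4 : 0 ≤ N * T / M := by positivity
      rw [heq]
      linarith [key]
    exact le_of_mul_le_mul_left h3 hTpos
  have htarget1 : 2 * ((1 : ℝ) / T) * (1 - T / 2 ^ (n + 1)) = 2 / T - 1 / M := by
    have : (2 : ℝ) ^ (n + 1) = 2 * M := by rw [hM]; ring
    rw [this]
    field_simp
  constructor
  · rw [hprD, htarget1]
    exact hfinal
  · rw [hprD]
    have : (0 : ℝ) ≤ 1 / M := by positivity
    calc D / N ≤ 2 / T - 1 / M := hfinal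
      _ ≤ 2 / T := by linarith
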